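/- arXiv:math/0603640 — 3 statements merged into one kernel-verified Lean document; each statement's English description precedes it below -/
import Mathlib

section
/- Let $\alpha < 0$ and $f \in L^1(\mathbb{R}^n)$ nontrivial and nonnegative. Then $(Mf)^\alpha \in RH_\infty$: there is a constant $C$ such that for every ball $B$ and a.e. $x \in B$, $Mf(x)^\alpha \le C\, \fint_B (Mf)^\alpha$. -/
open MeasureTheory Metric ENNReal

noncomputable section

/-- We work on `ℝ^n` with the sup metric, so that metric balls are (open) cubes. -/
abbrev Rn (n : ℕ) : Type := Fin n → ℝ

/-- Conjugate exponent of a real number. -/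
def rconj (p : ℝ) : ℝ := p / (p - 1)

/-- Conjugate exponent in `ℝ≥0∞`, with the conventions `(∞)' = 1` and `(1)' = ∞`. -/
def econj (s : ℝ≥0∞) : ℝ≥0∞ :=
  if s = ∞ then 1 else if s = 1 then ∞ else ENNReal.ofReal (rconj s.toReal)

variable {n : ℕ}

/-- Average of `u` over the ball/cube `B(c,r)` (w.r.t. Lebesgue measure). -/
def ballAvg (u : Rn n → ℝ) (c : Rn n) (r : ℝ) : ℝ := ⨍ x in ball c r, u x

/-- Muckenhoupt `A_p` condition with constant `C` (either `p = 1` or `p > 1`). -/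
def ApConst (w : Rn n → ℝ) (p C : ℝ) : Prop :=
  (p = 1 ∧ ∀ c : Rn n, ∀ r : ℝ, 0 < r →
      ∀ᵐ x ∂(volume.restrict (ball c r)), ballAvg w c r ≤ C * w x) ∨
  (1 < p ∧ ∀ c : Rn n, ∀ r : ℝ, 0 < r →
      ballAvg w c r * (ballAvg (fun x => w x ^ (1 - rconj p)) c r) ^ (p - 1) ≤ C)

/-- Muckenhoupt class `A_p`, `1 ≤ p < ∞`. -/
def MemAp (w : Rn n → ℝ) (p : ℝ) : Prop := ∃ C : ℝ, ApConst w p C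

/-- `A_p` for an extended exponent; `A_∞` is the union of the `A_p`. -/
def MemApE (w : Rn n → ℝ) (p : ℝ≥0∞) : Prop :=
  if p = ∞ then ∃ q : ℝ, 1 ≤ q ∧ MemAp w q else MemAp w p.toReal

/-- Reverse Hölder condition `RH_s` with constant `C`; `RH_1` consists of all weights,
and `RH_∞` is the essential supremum condition. -/
def RHConst (w : Rn n → ℝ) (s : ℝ≥0∞) (C : ℝ) : Prop :=
  if s = ∞ then
    ∀ c : Rn n, ∀ r : ℝ, 0 < r →
      ∀ᵐ x ∂(volume.restrict (ball c r)), w x ≤ C * ballAvg w c r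
  else
    s = 1 ∨ (1 < s ∧ ∀ c : Rn n, ∀ r : ℝ, 0 < r →
      (ballAvg (fun x => w x ^ s.toReal) c r) ^ (1 / s.toReal) ≤ C * ballAvg w c r)

/-- Reverse Hölder class `RH_s`, `1 ≤ s ≤ ∞`. -/
def MemRH (w : Rn n → ℝ) (s : ℝ≥0∞) : Prop := ∃ C : ℝ, RHConst w s C

/-- The uncentered Hardy–Littlewood maximal function (over balls/cubes). -/
def maxFn (f : Rn n → ℝ) (x : Rn n) : ℝ≥0∞ :=
  ⨆ (c : Rn n) (r : ℝ) (_ : x ∈ ball c r),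
    (∫⁻ y in ball c r, ENNReal.ofReal |f y|) / volume (ball c r)

/-- Real-valued maximal function. -/
def maxFnR (f : Rn n → ℝ) (x : Rn n) : ℝ := (maxFn f x).toReal

/-- Fefferman–Stein sharp maximal function. -/
def sharpFn (f : Rn n → ℝ) (x : Rn n) : ℝ≥0∞ :=
  ⨆ (c : Rn n) (r : ℝ) (_ : x ∈ ball c r),
    (∫⁻ y in ball c r, ENNReal.ofReal |f y - ballAvg f c r|) / volume (ball c r)

/-- `L^p(w)` norm of an `ℝ≥0∞`-valued function. -/
def wLpE (p : ℝ) (w : Rn n → ℝ) (u : Rn n → ℝ≥0∞) : ℝ≥0∞ :=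
  (∫⁻ x, u x ^ p * ENNReal.ofReal (w x)) ^ (1 / p)

/-- `L^p(w)` norm of a real-valued function. -/
def wLp (p : ℝ) (w u : Rn n → ℝ) : ℝ≥0∞ :=
  wLpE p w (fun x => ENNReal.ofReal |u x|)

/-- weak `L^p(w)` quasinorm. -/
def wWeakLp (p : ℝ) (w u : Rn n → ℝ) : ℝ≥0∞ :=
  ⨆ (lam : ℝ) (_ : 0 < lam),
    ENNReal.ofReal lam * (∫⁻ x in {y | lam < u y}, ENNReal.ofReal (w x)) ^ (1 / p)

/-- `r_w`, the infimum of the `r` for which `w ∈ A_r`. -/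
def rW (w : Rn n → ℝ) : ℝ := sInf {r : ℝ | 1 ≤ r ∧ MemAp w r}

/-- `s_w`, the supremum of the `s > 1` for which `w ∈ RH_s`. -/
def sW (w : Rn n → ℝ) : ℝ≥0∞ := sSup {s : ℝ≥0∞ | 1 < s ∧ MemRH w s}

/-!
Fix a ball `B = B(c,r)` and let `m` be the supremum of the averages of `|f|` over the concentric
balls `B(c,ρ)`, `ρ ≥ r`; it is positive and finite because `f ∈ L¹` is nontrivial, and `Mf ≥ m`
on `B`. A ball through a point of `B` of radius `ρ ≥ r` lies in `B(c,3ρ)`, so its average is at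
most `3ⁿ m`; hence `Mf > 2·12ⁿ m` at a point of `B` only through balls inside `B(c,3r)`, and the
Vitali covering lemma applied to `f` on `B(c,3r)` shows that `Mf ≤ 2·12ⁿ m` on at least half of
`B`. As `α < 0`, this gives `(Mf)^α ≤ m^α ≤ 2 (2·12ⁿ)^(-α) ⨍_B (Mf)^α` on `B`.
-/

lemma ball_subset_ball_of_mem_of_mem {X : Type*} [PseudoMetricSpace X] {x c c' : X} {r ρ : ℝ}
    (hx : x ∈ ball c r) (hx' : x ∈ ball c' ρ) {R : ℝ} (hR : 2 * ρ + r ≤ R) :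
    ball c' ρ ⊆ ball c R := by
  refine ball_subset_ball' ?_
  have := dist_triangle c' x c
  rw [mem_ball] at hx hx'
  rw [dist_comm] at hx'
  linarith

lemma volume_ball_mul {a ρ : ℝ} (ha : 0 < a) (hρ : 0 < ρ) (c c' : Rn n) :
    volume (ball c (a * ρ)) = ENNReal.ofReal (a ^ n) * volume (ball c' ρ) := by
  rw [Real.volume_pi_ball _ (by positivity), Real.volume_pi_ball _ hρ,
    ← ENNReal.ofReal_mul (by positivity), Fintype.card_fin, mul_left_comm, mul_pow]

lemma volume_closedBall_mul {a ρ : ℝ} (ha : 0 < a) (hρ : 0 < ρ) (c c' : Rn n) :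
    volume (closedBall c (a * ρ)) = ENNReal.ofReal (a ^ n) * volume (ball c' ρ) := by
  rw [Real.volume_pi_closedBall _ (by positivity), Real.volume_pi_ball _ hρ,
    ← ENNReal.ofReal_mul (by positivity), Fintype.card_fin, mul_left_comm, mul_pow]

lemma toReal_rpow_le_toReal_rpow {a b : ℝ≥0∞} {α : ℝ} (ha0 : 0 < a) (ha : a ≠ ∞) (hab : a ≤ b)
    (hα : α < 0) : b.toReal ^ α ≤ a.toReal ^ α := by
  by_cases hb : b = ∞
  · rw [hb, toReal_top, Real.zero_rpow hα.ne]
    positivity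
  · exact Real.rpow_le_rpow_of_nonpos (toReal_pos ha0.ne' ha) (toReal_mono hb hab) hα.le

lemma le_two_mul_setAverage {X : Type*} [MeasurableSpace X] {μ : Measure X} {s G : Set X}
    {w : X → ℝ} {a : ℝ} (hG : MeasurableSet G) (hGs : G ⊆ s) (hs0 : μ s ≠ 0) (hs : μ s ≠ ∞)
    (hsG : μ s ≤ 2 * μ G) (hw : IntegrableOn w s μ) (hw0 : ∀ x, 0 ≤ w x) (ha : 0 ≤ a)
    (haw : ∀ x ∈ G, a ≤ w x) : a ≤ 2 * ⨍ x in s, w x ∂μ := by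
  have hGt : μ G ≠ ∞ := (measure_lt_top_of_subset hGs hs).ne
  have hsG' : μ.real s ≤ 2 * μ.real G := by
    simpa [measureReal_def, toReal_mul] using toReal_mono (mul_ne_top ofNat_ne_top hGt) hsG
  have hint : a * μ.real s ≤ 2 * ∫ x in s, w x ∂μ :=
    calc a * μ.real s ≤ 2 * (a * μ.real G) := by nlinarith
      _ ≤ 2 * ∫ x in G, w x ∂μ := by
        gcongr
        exact setIntegral_ge_of_const_le_real hG hGt haw (hw.mono_set hGs)
      _ ≤ 2 * ∫ x in s, w x ∂μ := by
        gcongr 2 * ?_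
        exact setIntegral_mono_set hw (ae_of_all _ hw0) hGs.eventuallyLE
  have hpos : 0 < μ.real s := toReal_pos hs0 hs
  rw [setAverage_eq, smul_eq_mul, ← mul_assoc, mul_comm 2, mul_assoc, le_inv_mul_iff₀ hpos]
  linarith

lemma div_volume_le_maxFn (f : Rn n → ℝ) {c x : Rn n} {ρ : ℝ} (hx : x ∈ ball c ρ) :
    (∫⁻ y in ball c ρ, ENNReal.ofReal |f y|) / volume (ball c ρ) ≤ maxFn f x :=
  le_iSup₂_of_le c ρ (le_iSup_of_le hx le_rfl)

lemma lowerSemicontinuous_maxFn (f : Rn n → ℝ) : LowerSemicontinuous (maxFn f) := by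
  intro x t ht
  simp only [maxFn, lt_iSup_iff] at ht
  obtain ⟨c, ρ, hx, hlt⟩ := ht
  filter_upwards [isOpen_ball.mem_nhds hx] with y hy
  exact hlt.trans_le (div_volume_le_maxFn f hy)

lemma measurable_maxFn (f : Rn n → ℝ) : Measurable (maxFn f) :=
  (lowerSemicontinuous_maxFn f).measurable

lemma mul_volume_le_four_pow_mul_lintegral {g : Rn n → ℝ≥0∞} {t : ℝ≥0∞} {E : Set (Rn n)} {R : ℝ}
    (hE : ∀ x ∈ E, ∃ c ρ, x ∈ ball c ρ ∧ ρ ≤ R ∧ t * volume (ball c ρ) < ∫⁻ y in ball c ρ, g y) :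
    t * volume E ≤ ENNReal.ofReal (4 ^ n) * ∫⁻ y, g y := by
  choose! c ρ hmem hle hlt using hE
  obtain ⟨u, huE, hdisj, hcov⟩ :=
    Vitali.exists_disjoint_subfamily_covering_enlargement_closedBall E c ρ R hle 4 (by norm_num)
  have hρ : ∀ b ∈ u, 0 < ρ b := fun b hb => nonempty_ball.mp ⟨b, hmem b (huE hb)⟩
  have hu : u.Countable := hdisj.countable_of_nonempty_interior fun b hb =>
    ⟨b, ball_subset_interior_closedBall (hmem b (huE hb))⟩
  have hEcov : E ⊆ ⋃ b ∈ u, closedBall (c b) (4 * ρ b) := fun x hx => by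
    obtain ⟨b, hb, hsub⟩ := hcov x hx
    exact Set.mem_biUnion hb (hsub (ball_subset_closedBall (hmem x hx)))
  calc t * volume E ≤ t * ∑' b : u, volume (closedBall (c b) (4 * ρ b)) := by
        gcongr
        exact (measure_mono hEcov).trans (measure_biUnion_le volume hu _)
    _ = ENNReal.ofReal (4 ^ n) * ∑' b : u, t * volume (ball (c b) (ρ b)) := by
        rw [← ENNReal.tsum_mul_left, ← ENNReal.tsum_mul_left]
        refine tsum_congr fun b => ?_
        rw [volume_closedBall_mul (by norm_num) (hρ b b.2) _ (c b)]
        ring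
    _ ≤ ENNReal.ofReal (4 ^ n) * ∑' b : u, ∫⁻ y in ball (c b) (ρ b), g y := by
        gcongr with b
        exact (hlt b (huE b.2)).le
    _ = ENNReal.ofReal (4 ^ n) * ∫⁻ y in ⋃ b ∈ u, ball (c b) (ρ b), g y := by
        rw [lintegral_biUnion hu (fun b _ => measurableSet_ball)
          (hdisj.mono fun b => ball_subset_closedBall)]
    _ ≤ ENNReal.ofReal (4 ^ n) * ∫⁻ y, g y := by
        gcongr
        exact Measure.restrict_le_self

def outerAvg (f : Rn n → ℝ) (c : Rn n) (r : ℝ) : ℝ≥0∞ :=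
  ⨆ (ρ : ℝ) (_ : r ≤ ρ), (∫⁻ y in ball c ρ, ENNReal.ofReal |f y|) / volume (ball c ρ)

lemma div_volume_le_outerAvg (f : Rn n → ℝ) (c : Rn n) {r ρ : ℝ} (h : r ≤ ρ) :
    (∫⁻ y in ball c ρ, ENNReal.ofReal |f y|) / volume (ball c ρ) ≤ outerAvg f c r :=
  le_iSup₂_of_le ρ h le_rfl

lemma outerAvg_le_maxFn (f : Rn n → ℝ) {c x : Rn n} {r : ℝ} (hx : x ∈ ball c r) :
    outerAvg f c r ≤ maxFn f x :=
  iSup₂_le fun _ hρ => div_volume_le_maxFn f (ball_subset_ball hρ hx)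

lemma outerAvg_ne_top {f : Rn n → ℝ} (hf : Integrable f) (c : Rn n) {r : ℝ} (hr : 0 < r) :
    outerAvg f c r ≠ ∞ := by
  have hle : outerAvg f c r ≤ (∫⁻ y, ENNReal.ofReal |f y|) / volume (ball c r) :=
    iSup₂_le fun ρ hρ =>
      ENNReal.div_le_div (setLIntegral_le_lintegral _ _) (measure_mono (ball_subset_ball hρ))
  refine (hle.trans_lt (ENNReal.div_lt_top ?_ (measure_ball_pos volume c hr).ne')).ne
  simpa only [← Real.enorm_eq_ofReal_abs] using hf.2.ne

lemma outerAvg_ne_zero {f : Rn n → ℝ} (hf : AEMeasurable f) (hf0 : ¬ f =ᵐ[volume] 0)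
    (c : Rn n) (r : ℝ) : outerAvg f c r ≠ 0 := by
  intro hm
  have hball : ∀ k : ℕ, ∫⁻ y in ball c k, ENNReal.ofReal |f y| = 0 := fun k => by
    have h := div_volume_le_outerAvg f c (le_max_left r k)
    rw [hm, nonpos_iff_eq_zero, ENNReal.div_eq_zero_iff] at h
    refine le_antisymm ?_ zero_le
    exact (lintegral_mono_set (ball_subset_ball (le_max_right _ _))).trans
      (h.resolve_right measure_ball_lt_top.ne).le
  have huniv : ∫⁻ y, ENNReal.ofReal |f y| = 0 := by
    refine le_antisymm ?_ zero_le
    calc ∫⁻ y, ENNReal.ofReal |f y| = ∫⁻ y in ⋃ k : ℕ, ball c k, ENNReal.ofReal |f y| := by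
          rw [iUnion_ball_nat, Measure.restrict_univ]
      _ ≤ ∑' k : ℕ, ∫⁻ y in ball c k, ENNReal.ofReal |f y| := lintegral_iUnion_le _ _
      _ = 0 := by simp [hball]
  apply hf0
  filter_upwards [(lintegral_eq_zero_iff' hf.abs.ennreal_ofReal).mp huniv] with y hy
  simpa using hy

lemma lintegral_le_mul_volume_mul_outerAvg (f : Rn n → ℝ) {s : Set (Rn n)} {c : Rn n}
    {a ρ r : ℝ} (hs : s ⊆ ball c (a * ρ)) (ha : 0 < a) (hρ : 0 < ρ) (hr : r ≤ a * ρ)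
    (c' : Rn n) :
    ∫⁻ y in s, ENNReal.ofReal |f y| ≤ ENNReal.ofReal (a ^ n) * volume (ball c' ρ) * outerAvg f c r :=
  calc ∫⁻ y in s, ENNReal.ofReal |f y| ≤ ∫⁻ y in ball c (a * ρ), ENNReal.ofReal |f y| :=
        lintegral_mono_set hs
    _ = (∫⁻ y in ball c (a * ρ), ENNReal.ofReal |f y|) / volume (ball c (a * ρ)) *
          volume (ball c (a * ρ)) :=
        (ENNReal.div_mul_cancel (measure_ball_pos volume c (by positivity)).ne'
          measure_ball_lt_top.ne).symm
    _ ≤ outerAvg f c r * volume (ball c (a * ρ)) := by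
        gcongr
        exact div_volume_le_outerAvg f c hr
    _ = ENNReal.ofReal (a ^ n) * volume (ball c' ρ) * outerAvg f c r := by
        rw [volume_ball_mul ha hρ c c']
        ring

lemma exists_ball_lt_lintegral_of_lt_maxFn (f : Rn n → ℝ) {c x : Rn n} {r : ℝ} {t : ℝ≥0∞}
    (ht : ENNReal.ofReal (3 ^ n) * outerAvg f c r ≤ t) (hx : x ∈ ball c r)
    (hxt : t < maxFn f x) :
    ∃ c' ρ, x ∈ ball c' ρ ∧ ρ ≤ r ∧ t * volume (ball c' ρ) <
      ∫⁻ y in ball c' ρ, (ball c (3 * r)).indicator (fun y => ENNReal.ofReal |f y|) y := by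
  simp only [maxFn, lt_iSup_iff] at hxt
  obtain ⟨c', ρ, hx', hlt⟩ := hxt
  have hρ : 0 < ρ := nonempty_ball.mp ⟨x, hx'⟩
  replace hlt := ENNReal.mul_lt_of_lt_div hlt
  have hρr : ρ ≤ r := by
    by_contra! hrρ
    have hle := lintegral_le_mul_volume_mul_outerAvg f
      (ball_subset_ball_of_mem_of_mem hx hx' (by linarith : 2 * ρ + r ≤ 3 * ρ)) (by norm_num) hρ
      (by linarith) c'
    have hle' : ENNReal.ofReal (3 ^ n) * volume (ball c' ρ) * outerAvg f c r ≤
        t * volume (ball c' ρ) := by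
      rw [mul_right_comm]
      gcongr
    exact (hlt.trans_le (hle.trans hle')).false
  refine ⟨c', ρ, hx', hρr, ?_⟩
  rwa [setLIntegral_indicator measurableSet_ball,
    Set.inter_eq_right.mpr (ball_subset_ball_of_mem_of_mem hx hx' (by linarith))]

lemma mul_volume_superlevel_le (f : Rn n → ℝ) (c : Rn n) {r : ℝ} (hr : 0 < r) {t : ℝ≥0∞}
    (ht : ENNReal.ofReal (3 ^ n) * outerAvg f c r ≤ t) :
    t * volume {x ∈ ball c r | t < maxFn f x} ≤
      ENNReal.ofReal (12 ^ n) * volume (ball c r) * outerAvg f c r := by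
  have hE := fun x (hx : x ∈ {x ∈ ball c r | t < maxFn f x}) =>
    exists_ball_lt_lintegral_of_lt_maxFn f ht hx.1 hx.2
  calc t * volume {x ∈ ball c r | t < maxFn f x}
      ≤ ENNReal.ofReal (4 ^ n) * ∫⁻ y in ball c (3 * r), ENNReal.ofReal |f y| := by
        rw [← lintegral_indicator measurableSet_ball]
        exact mul_volume_le_four_pow_mul_lintegral hE
    _ ≤ ENNReal.ofReal (4 ^ n) *
          (ENNReal.ofReal (3 ^ n) * volume (ball c r) * outerAvg f c r) := by
        gcongr
        exact lintegral_le_mul_volume_mul_outerAvg f subset_rfl (by norm_num) hr (by linarith) c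
    _ = ENNReal.ofReal (12 ^ n) * volume (ball c r) * outerAvg f c r := by
        rw [← mul_assoc, ← mul_assoc, ← ENNReal.ofReal_mul (by positivity), ← mul_pow]
        norm_num

lemma volume_superlevel_le_half (f : Rn n → ℝ) (c : Rn n) {r : ℝ} (hr : 0 < r)
    (hm0 : outerAvg f c r ≠ 0) (hm : outerAvg f c r ≠ ∞) :
    volume {x ∈ ball c r | ENNReal.ofReal (2 * 12 ^ n) * outerAvg f c r < maxFn f x} ≤
      volume (ball c r) / 2 := by
  set Q := ENNReal.ofReal (12 ^ n) * outerAvg f c r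
  have hQ0 : Q ≠ 0 := mul_ne_zero (ENNReal.ofReal_pos.mpr (by positivity)).ne' hm0
  have hQ : Q ≠ ∞ := mul_ne_top ofReal_ne_top hm
  have htQ : ENNReal.ofReal (2 * 12 ^ n) * outerAvg f c r = 2 * Q := by
    rw [ENNReal.ofReal_mul zero_le_two, ofReal_ofNat, mul_assoc]
  have ht : ENNReal.ofReal (3 ^ n) * outerAvg f c r ≤ 2 * Q := by
    rw [← htQ]
    gcongr
    linarith [pow_le_pow_left₀ (by norm_num : (0 : ℝ) ≤ 3) (by norm_num : (3 : ℝ) ≤ 12) n,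
      pow_pos (by norm_num : (0 : ℝ) < 12) n]
  rw [htQ, ENNReal.le_div_iff_mul_le (Or.inl two_ne_zero) (Or.inl ofNat_ne_top)]
  refine (ENNReal.mul_le_mul_iff_right hQ0 hQ).mp ?_
  calc Q * (volume {x ∈ ball c r | 2 * Q < maxFn f x} * 2)
      = 2 * Q * volume {x ∈ ball c r | 2 * Q < maxFn f x} := by ring
    _ ≤ ENNReal.ofReal (12 ^ n) * volume (ball c r) * outerAvg f c r :=
        mul_volume_superlevel_le f c hr ht
    _ = Q * volume (ball c r) := mul_right_comm _ _ _

lemma volume_ball_le_two_mul_volume_sublevel (f : Rn n → ℝ) (c : Rn n) {r : ℝ} (hr : 0 < r)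
    (hm0 : outerAvg f c r ≠ 0) (hm : outerAvg f c r ≠ ∞) :
    volume (ball c r) ≤
      2 * volume {x ∈ ball c r | maxFn f x ≤ ENNReal.ofReal (2 * 12 ^ n) * outerAvg f c r} := by
  set t := ENNReal.ofReal (2 * 12 ^ n) * outerAvg f c r
  have hB : volume (ball c r) ≠ ∞ := measure_ball_lt_top.ne
  have hcover : volume (ball c r) ≤
      volume (ball c r) / 2 + volume {x ∈ ball c r | maxFn f x ≤ t} := by
    refine (measure_mono fun x hx => ?_).trans (measure_union_le _ _) |>.trans
      (add_le_add_left (volume_superlevel_le_half f c hr hm0 hm) _)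
    rcases lt_or_ge t (maxFn f x) with h | h
    · exact Or.inl ⟨hx, h⟩
    · exact Or.inr ⟨hx, h⟩
  conv_lhs at hcover => rw [← ENNReal.add_halves (volume (ball c r))]
  rw [ENNReal.add_le_add_iff_left (div_ne_top hB two_ne_zero)] at hcover
  calc volume (ball c r) = 2 * (volume (ball c r) / 2) :=
        (ENNReal.mul_div_cancel two_ne_zero ofNat_ne_top).symm
    _ ≤ _ := by gcongr

lemma rpow_maxFnR_le_mul_setAverage (f : Rn n → ℝ) (c : Rn n) {r α : ℝ} (hr : 0 < r)
    (hα : α < 0) (hm0 : outerAvg f c r ≠ 0) (hm : outerAvg f c r ≠ ∞) {x : Rn n}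
    (hx : x ∈ ball c r) :
    maxFnR f x ^ α ≤ 2 * (2 * 12 ^ n) ^ (-α) * ⨍ y in ball c r, maxFnR f y ^ α := by
  set K : ℝ := 2 * 12 ^ n
  set m := outerAvg f c r
  have hK : 0 < K := by positivity
  have hmpos : 0 < m := pos_iff_ne_zero.2 hm0
  have hupper : ∀ y ∈ ball c r, maxFnR f y ^ α ≤ m.toReal ^ α := fun y hy =>
    toReal_rpow_le_toReal_rpow hmpos hm (outerAvg_le_maxFn f hy) hα
  have hlower : ∀ y ∈ {y ∈ ball c r | maxFn f y ≤ ENNReal.ofReal K * m},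
      (K * m.toReal) ^ α ≤ maxFnR f y ^ α := by
    rintro y ⟨hy, hle⟩
    have := toReal_rpow_le_toReal_rpow (hmpos.trans_le (outerAvg_le_maxFn f hy))
      (ne_top_of_le_ne_top (mul_ne_top ofReal_ne_top hm) hle) hle hα
    rwa [toReal_mul, toReal_ofReal hK.le] at this
  have hw0 : ∀ y, 0 ≤ maxFnR f y ^ α := fun y => Real.rpow_nonneg toReal_nonneg _
  have hw : IntegrableOn (fun y => maxFnR f y ^ α) (ball c r) :=
    Measure.integrableOn_of_bounded (M := m.toReal ^ α) measure_ball_lt_top.ne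
      ((measurable_maxFn f).ennreal_toReal.pow_const α).aestronglyMeasurable
      ((ae_restrict_iff' measurableSet_ball).2 (ae_of_all _ fun y hy => by
        rw [Real.norm_of_nonneg (hw0 y)]
        exact hupper y hy))
  have havg := le_two_mul_setAverage (G := {y ∈ ball c r | maxFn f y ≤ ENNReal.ofReal K * m})
    (measurableSet_ball.inter (measurable_maxFn f measurableSet_Iic)) (Set.sep_subset _ _)
    (measure_ball_pos volume c hr).ne' measure_ball_lt_top.ne
    (volume_ball_le_two_mul_volume_sublevel f c hr hm0 hm) hw hw0
    (by positivity) hlower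
  calc maxFnR f x ^ α ≤ m.toReal ^ α := hupper x hx
    _ = K ^ (-α) * (K * m.toReal) ^ α := by
        rw [Real.mul_rpow hK.le toReal_nonneg, ← mul_assoc, ← Real.rpow_add hK]
        simp
    _ ≤ K ^ (-α) * (2 * ⨍ y in ball c r, maxFnR f y ^ α) := by gcongr
    _ = 2 * K ^ (-α) * ⨍ y in ball c r, maxFnR f y ^ α := by ring

theorem stmt5_general {n : ℕ} (f : Rn n → ℝ)
    (hfi : MeasureTheory.Integrable f) (hfne : ¬ f =ᵐ[volume] 0)
    (α : ℝ) (hα : α < 0) :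
    ∃ C : ℝ, 0 < C ∧ ∀ c : Rn n, ∀ r : ℝ, 0 < r →
      ∀ᵐ x ∂(volume.restrict (ball c r)),
        maxFnR f x ^ α ≤ C * ⨍ y in ball c r, maxFnR f y ^ α := by
  refine ⟨2 * (2 * 12 ^ n) ^ (-α), by positivity, fun c r hr => ?_⟩
  exact ae_restrict_of_forall_mem measurableSet_ball fun x hx =>
    rpow_maxFnR_le_mul_setAverage f c hr hα (outerAvg_ne_zero hfi.aemeasurable hfne c r)
      (outerAvg_ne_top hfi c hr) hx

/-- For `α < 0` and nontrivial nonnegative `f ∈ L¹`, the weight `(Mf)^α` is in `RH_∞`: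
there is `C` with `Mf(x)^α ≤ C ⨍_B (Mf)^α` for every ball `B` and a.e. `x ∈ B`. -/
theorem stmt5 {n : ℕ} (f : Rn n → ℝ) (hf0 : ∀ x, 0 ≤ f x)
    (hfi : MeasureTheory.Integrable f) (hfne : ¬ f =ᵐ[volume] 0)
    (α : ℝ) (hα : α < 0) :
    ∃ C : ℝ, 0 < C ∧ ∀ c : Rn n, ∀ r : ℝ, 0 < r →
      ∀ᵐ x ∂(volume.restrict (ball c r)),
        maxFnR f x ^ α ≤ C * ⨍ y in ball c r, maxFnR f y ^ α :=
  stmt5_general f hfi hfne α hα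

end
end

section
/- Nonempty annuli imply annuli have comparable measure: Let $(\mathcal{X}, d, \mu)$ be a space of homogeneous type (doubling measure with doubling order $D$). Assume there exists $\varepsilon \in (0,1)$ such that for every ball $B$, $(2-\varepsilon)B \setminus B \ne \emptyset$. Then there exist constants $0 < c \le C$ independent of $B$ such that $c\,\mu(2B) \le \mu(2B \setminus B) \le \mu(2B)$ for every ball $B$. -/
/-!
Write `δ = ε / (3 - ε)`, so that `(2 - ε)(1 + δ) = 2 - δ`. Applied at radius `(1 + δ) r`, the
annulus hypothesis gives a point `y` with `(1 + δ) r ≤ d(x, y) < (2 - δ) r`, and then the ball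
`B(y, δ r)` lies in `B(x, 2r) \ B(x, r)`, while `B(x, 2r)` lies in `B(y, 4r)`. Doubling `k` times,
with `2^k δ ≥ 4`, gives `μ(B(x, 2r)) ≤ C₀^k μ(B(x, 2r) \ B(x, r))`.
-/

open MeasureTheory Metric ENNReal

theorem ENNReal.exists_pos_ofReal_mul_le_of_le_mul {C : ℝ≥0∞} (hC : C ≠ ∞) :
    ∃ c : ℝ, 0 < c ∧ ∀ a b : ℝ≥0∞, a ≤ C * b → ENNReal.ofReal c * a ≤ b := by
  have hpos : 0 < C.toReal + 1 := by positivity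
  refine ⟨(C.toReal + 1)⁻¹, inv_pos.mpr hpos, fun a b hab => ?_⟩
  have hcC : ENNReal.ofReal (C.toReal + 1)⁻¹ * C ≤ 1 :=
    calc ENNReal.ofReal (C.toReal + 1)⁻¹ * C = ENNReal.ofReal ((C.toReal + 1)⁻¹ * C.toReal) := by
          rw [ofReal_mul (by positivity), ofReal_toReal hC]
      _ ≤ 1 := ofReal_le_one.mpr ((inv_mul_le_iff₀ hpos).mpr (by linarith))
  calc ENNReal.ofReal (C.toReal + 1)⁻¹ * a ≤ ENNReal.ofReal (C.toReal + 1)⁻¹ * (C * b) := by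
        gcongr
    _ = ENNReal.ofReal (C.toReal + 1)⁻¹ * C * b := (mul_assoc _ _ _).symm
    _ ≤ b := mul_le_of_le_one_left' hcC

theorem ball_subset_ball_diff_ball {X : Type*} [PseudoMetricSpace X] {x y : X} {r s : ℝ}
    (hy : r + s ≤ dist x y) (hy' : dist x y ≤ 2 * r - s) : ball y s ⊆ ball x (2 * r) \ ball x r :=
  Set.subset_sdiff.mpr
    ⟨ball_subset_ball' (by rw [dist_comm]; linarith), (ball_disjoint_ball hy).symm⟩

section Doubling

variable {X : Type*} [PseudoMetricSpace X] [MeasurableSpace X] {μ : Measure X} {C : ℝ≥0∞}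

theorem measure_ball_two_pow_mul_le
    (hdoub : ∀ (x : X) (r : ℝ), 0 < r → μ (ball x (2 * r)) ≤ C * μ (ball x r))
    (k : ℕ) (x : X) {r : ℝ} (hr : 0 < r) : μ (ball x (2 ^ k * r)) ≤ C ^ k * μ (ball x r) := by
  induction k with
  | zero => simp
  | succ k ih =>
    calc μ (ball x (2 ^ (k + 1) * r)) = μ (ball x (2 * (2 ^ k * r))) := by ring_nf
      _ ≤ C * μ (ball x (2 ^ k * r)) := hdoub x _ (by positivity)
      _ ≤ C * (C ^ k * μ (ball x r)) := by gcongr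
      _ = C ^ (k + 1) * μ (ball x r) := by ring

theorem measure_ball_le_pow_mul_measure_ball_diff_ball
    (hdoub : ∀ (x : X) (r : ℝ), 0 < r → μ (ball x (2 * r)) ≤ C * μ (ball x r))
    {x y : X} {r δ : ℝ} (hr : 0 < r) (hδ : 0 < δ) {k : ℕ} (hk : 4 ≤ 2 ^ k * δ)
    (hy : (1 + δ) * r ≤ dist x y) (hy' : dist x y ≤ (2 - δ) * r) :
    μ (ball x (2 * r)) ≤ C ^ k * μ (ball x (2 * r) \ ball x r) := by
  have hbig : ball x (2 * r) ⊆ ball y (2 ^ k * (δ * r)) :=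
    ball_subset_ball' (by nlinarith)
  calc μ (ball x (2 * r)) ≤ μ (ball y (2 ^ k * (δ * r))) := measure_mono hbig
    _ ≤ C ^ k * μ (ball y (δ * r)) := measure_ball_two_pow_mul_le hdoub k y (by positivity)
    _ ≤ C ^ k * μ (ball x (2 * r) \ ball x r) := by
        gcongr
        exact ball_subset_ball_diff_ball (by linarith) (by linarith)

end Doubling

theorem stmt15_general {X : Type*} [MetricSpace X] [MeasurableSpace X]
    (μ : Measure X) (C0 : ℝ≥0∞) (hC0 : C0 ≠ ∞)
    (hdoub : ∀ (x : X) (r : ℝ), 0 < r → μ (ball x (2 * r)) ≤ C0 * μ (ball x r))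
    (ε : ℝ) (hε0 : 0 < ε) (hε1 : ε < 1)
    (hann : ∀ (x : X) (r : ℝ), 0 < r → (ball x ((2 - ε) * r) \ ball x r).Nonempty) :
    ∃ c : ℝ, 0 < c ∧ ∀ (x : X) (r : ℝ), 0 < r →
      ENNReal.ofReal c * μ (ball x (2 * r)) ≤ μ (ball x (2 * r) \ ball x r) ∧
      μ (ball x (2 * r) \ ball x r) ≤ μ (ball x (2 * r)) := by
  set δ := ε / (3 - ε)
  have hδ : 0 < δ := div_pos hε0 (by linarith)
  have hshrink : (2 - ε) * (1 + δ) = 2 - δ := by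
    simp only [δ]
    field_simp [show (3 : ℝ) - ε ≠ 0 by linarith]
    ring
  obtain ⟨k, hk⟩ := pow_unbounded_of_one_lt (4 / δ) one_lt_two
  obtain ⟨c, hc, hc_le⟩ := exists_pos_ofReal_mul_le_of_le_mul (pow_ne_top hC0 (n := k))
  refine ⟨c, hc, fun x r hr => ⟨hc_le _ _ ?_, measure_mono Set.sdiff_subset⟩⟩
  obtain ⟨y, hy_in, hy_out⟩ := hann x ((1 + δ) * r) (by positivity)
  rw [mem_ball, dist_comm, ← mul_assoc, hshrink] at hy_in
  rw [mem_ball, dist_comm, not_lt] at hy_out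
  exact measure_ball_le_pow_mul_measure_ball_diff_ball hdoub hr hδ
    ((div_le_iff₀ hδ).mp hk.le) hy_out hy_in.le

/-- In a space of homogeneous type in which all annuli `(2-ε)B \ B` are nonempty, the annulus
`2B \ B` has measure comparable to that of `2B`, uniformly in the ball `B`. -/
theorem stmt15 {X : Type*} [MetricSpace X] [MeasurableSpace X] [BorelSpace X]
    (μ : Measure X) (C0 : ℝ≥0∞) (hC0 : C0 ≠ ∞)
    (hdoub : ∀ (x : X) (r : ℝ), 0 < r → μ (ball x (2 * r)) ≤ C0 * μ (ball x r))
    (hfin : ∀ (x : X) (r : ℝ), 0 < r → μ (ball x r) < ∞)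
    (ε : ℝ) (hε0 : 0 < ε) (hε1 : ε < 1)
    (hann : ∀ (x : X) (r : ℝ), 0 < r → (ball x ((2 - ε) * r) \ ball x r).Nonempty) :
    ∃ c : ℝ, 0 < c ∧ ∀ (x : X) (r : ℝ), 0 < r →
      ENNReal.ofReal c * μ (ball x (2 * r)) ≤ μ (ball x (2 * r) \ ball x r) ∧
      μ (ball x (2 * r) \ ball x r) ≤ μ (ball x (2 * r)) :=
  stmt15_general μ C0 hC0 hdoub ε hε0 hε1 hann
end

section
/- Lipschitz bound on the complement of the maximal level set: Let $d\mu = w\,dx$ be a doubling measure on $\mathbb{R}^n$ supporting the $L^p$ Poincaré inequality $(\fint_B |f - m_B f|^p d\mu)^{1/p} \le C\,r(B)(\fint_B |\nabla f|^p d\mu)^{1/p}$, $1 \le p < \infty$. Let $f$ be smooth with $\|\nabla f\|_{L^p(\mu)} < \infty$, $\alpha > 0$, and $F = \{x : M_\mu(|\nabla f|^p)(x) \le \alpha^p\}$. Then $f$ can be redefined on a $\mu$-null subset of $F$ so that for all $x \in F$ and all cubes $Q$ centered at $x$, $|f(x) - m_Q f| \le C\alpha\,\ell(Q)$, and for all $x,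 y \in F$, $|f(x) - f(y)| \le C\alpha |x-y|$. -/
open MeasureTheory Metric ENNReal

noncomputable section

variable {n : ℕ}

/-- Uncentered maximal function over cubes with respect to a measure `μ`. -/
def maxFnMu (μ : Measure (Rn n)) (g : Rn n → ℝ) (x : Rn n) : ℝ≥0∞ :=
  ⨆ (c : Rn n) (r : ℝ) (_ : x ∈ ball c r),
    (∫⁻ y in ball c r, ENNReal.ofReal (g y) ∂μ) / μ (ball c r)

lemma aux_locfin (w : Rn n → ℝ) (hwloc : MeasureTheory.LocallyIntegrable w) :
    IsFiniteMeasureOnCompacts (volume.withDensity fun x => ENNReal.ofReal (w x)) := by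
  have : IsLocallyFiniteMeasure (volume.withDensity fun x => ENNReal.ofReal (w x)) := by
    constructor
    intro x
    refine ⟨ball x 1, ball_mem_nhds x one_pos, ?_⟩
    rw [withDensity_apply _ measurableSet_ball]
    calc ∫⁻ y in ball x 1, ENNReal.ofReal (w y) ∂volume
        ≤ ∫⁻ y in closedBall x 1, (‖w y‖₊ : ℝ≥0∞) ∂volume := by
          refine le_trans (lintegral_mono fun y => ?_) (lintegral_mono_set ball_subset_closedBall)
          rw [← enorm_eq_nnnorm, ← ofReal_norm_eq_enorm, Real.norm_eq_abs]
          exact ENNReal.ofReal_le_ofReal (le_abs_self _)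
      _ < ∞ := (hwloc.integrableOn_isCompact (isCompact_closedBall x 1)).2
  infer_instance

lemma aux_pos (w : Rn n → ℝ) (hw0 : ∀ᵐ x, 0 < w x) (hwloc : MeasureTheory.LocallyIntegrable w)
    (c : Rn n) (r : ℝ) (hr : 0 < r) :
    (volume.withDensity fun x => ENNReal.ofReal (w x)) (ball c r) ≠ 0 := by
  intro h0
  rw [withDensity_apply _ measurableSet_ball] at h0
  have hwm : AEMeasurable (fun y => ENNReal.ofReal (w y)) (volume.restrict (ball c r)) :=
    ENNReal.measurable_ofReal.comp_aemeasurable hwloc.aestronglyMeasurable.aemeasurable.restrict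
  rw [lintegral_eq_zero_iff' hwm] at h0
  have h1 : ∀ᵐ y ∂(volume.restrict (ball c r)), 0 < w y := ae_restrict_of_ae hw0
  have hne : (volume.restrict (ball c r)) ≠ 0 := by
    simp [Measure.restrict_eq_zero, (measure_ball_pos volume c hr).ne']
  haveI := ae_neBot.2 hne
  obtain ⟨y, hy0, hy1⟩ := (h0.and h1).exists
  have : ENNReal.ofReal (w y) = 0 := hy0
  exact absurd this (ENNReal.ofReal_pos.2 hy1).ne'

section avg
variable (μ : Measure (Rn n))

lemma aux_avg_nonneg (u : Rn n → ℝ) (hu : ∀ z, 0 ≤ u z) (s : Set (Rn n)) :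
    0 ≤ ⨍ y in s, u y ∂μ := by
  rw [setAverage_eq]
  exact smul_nonneg (by positivity) (integral_nonneg hu)

lemma aux_avg_abs (u : Rn n → ℝ) (s : Set (Rn n)) :
    |⨍ y in s, u y ∂μ| ≤ ⨍ y in s, |u y| ∂μ := by
  rw [setAverage_eq, setAverage_eq, smul_eq_mul, smul_eq_mul, abs_mul,
    abs_of_nonneg (inv_nonneg.2 measureReal_nonneg)]
  refine mul_le_mul_of_nonneg_left ?_ (by positivity)
  simpa [Real.norm_eq_abs] using norm_integral_le_integral_norm (μ := μ.restrict s) u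

lemma aux_avg_sub (s : Set (Rn n)) (h0 : μ s ≠ 0) (hinf : μ s ≠ ∞) (u : Rn n → ℝ)
    (hu : IntegrableOn u s μ) (m : ℝ) :
    ⨍ y in s, (u y - m) ∂μ = (⨍ y in s, u y ∂μ) - m := by
  have hV : ((μ s).toReal : ℝ) ≠ 0 := ENNReal.toReal_ne_zero.2 ⟨h0, hinf⟩
  rw [setAverage_eq, setAverage_eq,
    integral_sub hu (integrableOn_const hinf), setIntegral_const,
    smul_sub, smul_smul, inv_mul_cancel₀ (show μ.real s ≠ 0 from hV), one_smul]

end avg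

/-- Lipschitz bound on the complement of the maximal level set: on
`F = {M_μ(|∇f|^p) ≤ α^p}` the function `f` can be redefined on a `μ`-null subset of `F` so
that `|f(x) - m_Q f| ≤ Cα ℓ(Q)` for cubes `Q` centered at `x ∈ F` and
`|f(x) - f(y)| ≤ Cα|x-y|` on `F`. -/
theorem stmt16 {n : ℕ} (p : ℝ) (hp : 1 ≤ p)
    (w : Rn n → ℝ) (hw0 : ∀ᵐ x, 0 < w x) (hwloc : MeasureTheory.LocallyIntegrable w)
    (μ : Measure (Rn n)) (hμ : μ = volume.withDensity (fun x => ENNReal.ofReal (w x)))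
    (C0 : ℝ≥0∞) (hC0 : C0 ≠ ∞)
    (hdoub : ∀ (c : Rn n) (r : ℝ), 0 < r → μ (ball c (2 * r)) ≤ C0 * μ (ball c r))
    (CP : ℝ)
    (hPoin : ∀ g : Rn n → ℝ, LocallyLipschitz g → ∀ (c : Rn n) (r : ℝ), 0 < r →
      (⨍ x in ball c r, |g x - ⨍ y in ball c r, g y ∂μ| ^ p ∂μ) ^ (1 / p) ≤
        CP * r * (⨍ x in ball c r, ‖fderiv ℝ g x‖ ^ p ∂μ) ^ (1 / p))
    (f : Rn n → ℝ) (hf : ContDiff ℝ (⊤ : ℕ∞) f)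
    (hgrad : (∫⁻ x, ENNReal.ofReal (‖fderiv ℝ f x‖ ^ p) ∂μ) < ∞)
    (α : ℝ) (hα : 0 < α) :
    ∃ C : ℝ, 0 < C ∧ ∃ g : Rn n → ℝ,
      {x | g x ≠ f x} ⊆
        {x | maxFnMu μ (fun y => ‖fderiv ℝ f y‖ ^ p) x ≤ ENNReal.ofReal (α ^ p)} ∧
      μ {x | g x ≠ f x} = 0 ∧
      (∀ x ∈ {x | maxFnMu μ (fun y => ‖fderiv ℝ f y‖ ^ p) x ≤ ENNReal.ofReal (α ^ p)},
        ∀ r : ℝ, 0 < r → |g x - ⨍ y in ball x r, g y ∂μ| ≤ C * α * (2 * r)) ∧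
      (∀ x ∈ {x | maxFnMu μ (fun y => ‖fderiv ℝ f y‖ ^ p) x ≤ ENNReal.ofReal (α ^ p)},
        ∀ y ∈ {x | maxFnMu μ (fun y => ‖fderiv ℝ f y‖ ^ p) x ≤ ENNReal.ofReal (α ^ p)},
          |g x - g y| ≤ C * α * dist x y) := by
  have hp0 : (0:ℝ) < p := lt_of_lt_of_le one_pos hp
  subst hμ
  set μ : Measure (Rn n) := volume.withDensity (fun x => ENNReal.ofReal (w x)) with hμdef
  haveI : IsFiniteMeasureOnCompacts μ := aux_locfin w hwloc
  have hpos : ∀ (c : Rn n) (r : ℝ), 0 < r → μ (ball c r) ≠ 0 := fun c r hr =>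
    aux_pos w hw0 hwloc c r hr
  have hfin : ∀ (c : Rn n) (r : ℝ), μ (ball c r) ≠ ∞ := fun c r => measure_ball_lt_top.ne
  have hfc : Continuous f := hf.continuous
  have hrpowc : Continuous (fun t : ℝ => t ^ p) :=
    continuous_iff_continuousAt.2 fun x => Real.continuousAt_rpow_const _ p (Or.inr hp0.le)
  have hDcont : Continuous (fun y : Rn n => ‖fderiv ℝ f y‖ ^ p) :=
    hrpowc.comp (hf.continuous_fderiv (by simp)).norm
  have hint : ∀ (u : Rn n → ℝ), Continuous u → ∀ (c : Rn n) (r : ℝ), IntegrableOn u (ball c r) μ :=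
    fun u hu c r => (hu.continuousOn.integrableOn_compact (isCompact_closedBall c r)).mono_set
      ball_subset_closedBall
  have hCP'0 : (0:ℝ) ≤ max CP 0 := le_max_right _ _
  -- maximal function bound on averages of the gradient
  have hmax : ∀ x, maxFnMu μ (fun y => ‖fderiv ℝ f y‖ ^ p) x ≤ ENNReal.ofReal (α ^ p) →
      ∀ (c : Rn n) (r : ℝ), 0 < r → x ∈ ball c r →
      ⨍ y in ball c r, ‖fderiv ℝ f y‖ ^ p ∂μ ≤ α ^ p := by
    intro x hx c r hr hxb
    have h1 : (∫⁻ y in ball c r, ENNReal.ofReal (‖fderiv ℝ f y‖ ^ p) ∂μ) / μ (ball c r)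
        ≤ ENNReal.ofReal (α ^ p) := by
      refine le_trans ?_ hx
      rw [maxFnMu]
      exact le_iSup_of_le c (le_iSup_of_le r (le_iSup_of_le hxb le_rfl))
    have h2 : (∫⁻ y in ball c r, ENNReal.ofReal (‖fderiv ℝ f y‖ ^ p) ∂μ)
        ≤ ENNReal.ofReal (α ^ p) * μ (ball c r) :=
      (ENNReal.div_le_iff_le_mul (Or.inl (hpos c r hr)) (Or.inl (hfin c r))).1 h1
    have hV : ((μ (ball c r)).toReal) ≠ 0 :=
      ENNReal.toReal_ne_zero.2 ⟨hpos c r hr, hfin c r⟩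
    have h3 : ⨍ y in ball c r, ‖fderiv ℝ f y‖ ^ p ∂μ
        = ((μ (ball c r)).toReal)⁻¹
          * (∫⁻ y in ball c r, ENNReal.ofReal (‖fderiv ℝ f y‖ ^ p) ∂μ).toReal := by
      rw [setAverage_eq, smul_eq_mul, integral_eq_lintegral_of_nonneg_ae
        (Filter.Eventually.of_forall fun y => Real.rpow_nonneg (norm_nonneg _) p)
        hDcont.aestronglyMeasurable.restrict, measureReal_def]
    rw [h3]
    have h4 : (∫⁻ y in ball c r, ENNReal.ofReal (‖fderiv ℝ f y‖ ^ p) ∂μ).toReal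
        ≤ α ^ p * (μ (ball c r)).toReal := by
      have := ENNReal.toReal_mono (ENNReal.mul_ne_top ENNReal.ofReal_ne_top (hfin c r)) h2
      rwa [ENNReal.toReal_mul, ENNReal.toReal_ofReal (Real.rpow_nonneg hα.le p)] at this
    calc ((μ (ball c r)).toReal)⁻¹
          * (∫⁻ y in ball c r, ENNReal.ofReal (‖fderiv ℝ f y‖ ^ p) ∂μ).toReal
        ≤ ((μ (ball c r)).toReal)⁻¹ * (α ^ p * (μ (ball c r)).toReal) :=
          mul_le_mul_of_nonneg_left h4 (by positivity)
      _ = α ^ p := by field_simp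
  -- Poincaré + Jensen on balls containing a point of F
  have hpoinF : ∀ x, maxFnMu μ (fun y => ‖fderiv ℝ f y‖ ^ p) x ≤ ENNReal.ofReal (α ^ p) →
      ∀ (c : Rn n) (r : ℝ), 0 < r → x ∈ ball c r →
      ⨍ y in ball c r, |f y - ⨍ z in ball c r, f z ∂μ| ∂μ ≤ (max CP 0) * r * α := by
    intro x hx c r hr hxb
    set m : ℝ := ⨍ z in ball c r, f z ∂μ with hm
    have hcont1 : Continuous fun y : Rn n => |f y - m| := (hfc.sub continuous_const).abs
    have hu : IntegrableOn (fun y => |f y - m|) (ball c r) μ := hint _ hcont1 c r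
    have hup : IntegrableOn (fun y => |f y - m| ^ p) (ball c r) μ :=
      hint _ (hrpowc.comp hcont1) c r
    have hjen : (⨍ y in ball c r, |f y - m| ∂μ) ^ p ≤ ⨍ y in ball c r, |f y - m| ^ p ∂μ :=
      (convexOn_rpow hp).map_set_average_le hrpowc.continuousOn isClosed_Ici
        (hpos c r hr) (hfin c r)
        (Filter.Eventually.of_forall fun y => Set.mem_Ici.2 (abs_nonneg _)) hu hup
    have ha0 : 0 ≤ ⨍ y in ball c r, |f y - m| ∂μ :=
      aux_avg_nonneg μ _ (fun z => abs_nonneg _) _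
    have h1 : ⨍ y in ball c r, |f y - m| ∂μ ≤ (⨍ y in ball c r, |f y - m| ^ p ∂μ) ^ (1/p) := by
      have h := Real.rpow_le_rpow (Real.rpow_nonneg ha0 p) hjen (by positivity : (0:ℝ) ≤ 1/p)
      rwa [← Real.rpow_mul ha0, mul_one_div, div_self hp0.ne', Real.rpow_one] at h
    have h2 : (⨍ y in ball c r, |f y - m| ^ p ∂μ) ^ (1/p)
        ≤ CP * r * (⨍ y in ball c r, ‖fderiv ℝ f y‖ ^ p ∂μ) ^ (1/p) := by
      have h := hPoin f (hf.of_le (by simp)).locallyLipschitz c r hr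
      rw [← hm] at h
      exact h
    have hg0 : 0 ≤ ⨍ y in ball c r, ‖fderiv ℝ f y‖ ^ p ∂μ :=
      aux_avg_nonneg μ _ (fun z => Real.rpow_nonneg (norm_nonneg _) p) _
    have h3 : (⨍ y in ball c r, ‖fderiv ℝ f y‖ ^ p ∂μ) ^ (1/p) ≤ α := by
      have h := Real.rpow_le_rpow hg0 (hmax x hx c r hr hxb) (by positivity : (0:ℝ) ≤ 1/p)
      rwa [← Real.rpow_mul hα.le, mul_one_div, div_self hp0.ne', Real.rpow_one] at h
    have hgp0 : 0 ≤ (⨍ y in ball c r, ‖fderiv ℝ f y‖ ^ p ∂μ) ^ (1/p) := Real.rpow_nonneg hg0 _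
    calc ⨍ y in ball c r, |f y - m| ∂μ
        ≤ (⨍ y in ball c r, |f y - m| ^ p ∂μ) ^ (1/p) := h1
      _ ≤ CP * r * (⨍ y in ball c r, ‖fderiv ℝ f y‖ ^ p ∂μ) ^ (1/p) := h2
      _ ≤ (max CP 0) * r * (⨍ y in ball c r, ‖fderiv ℝ f y‖ ^ p ∂μ) ^ (1/p) :=
          mul_le_mul_of_nonneg_right
            (mul_le_mul_of_nonneg_right (le_max_left _ _) hr.le) hgp0
      _ ≤ (max CP 0) * r * α :=
          mul_le_mul_of_nonneg_left h3 (mul_nonneg hCP'0 hr.le)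
  -- doubling with real constant
  set K : ℝ := max C0.toReal 1 with hKdef
  have hK0 : (0:ℝ) ≤ K := le_trans zero_le_one (le_max_right _ _)
  have hC0K : C0 ≤ ENNReal.ofReal K := by
    rw [← ENNReal.ofReal_toReal hC0]
    exact ENNReal.ofReal_le_ofReal (le_max_left _ _)
  have hKd : ∀ (c : Rn n) (r : ℝ), 0 < r → μ (ball c (2*r)) ≤ ENNReal.ofReal K * μ (ball c r) :=
    fun c r hr => le_trans (hdoub c r hr) (mul_le_mul_left hC0K _)
  -- comparison of averages over nested balls
  have hstep : ∀ x, maxFnMu μ (fun y => ‖fderiv ℝ f y‖ ^ p) x ≤ ENNReal.ofReal (α ^ p) →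
      ∀ (c : Rn n) (r : ℝ), 0 < r → x ∈ ball c r →
      ∀ (c' : Rn n) (s : ℝ), 0 < s → ball c' s ⊆ ball c r →
      ∀ k : ℝ, 0 ≤ k → μ (ball c r) ≤ ENNReal.ofReal k * μ (ball c' s) →
      |(⨍ y in ball c' s, f y ∂μ) - ⨍ y in ball c r, f y ∂μ| ≤ k * ((max CP 0) * r * α) := by
    intro x hx c r hr hxb c' s hs hsub k hk hkμ
    set m : ℝ := ⨍ z in ball c r, f z ∂μ with hm
    have e1 : (⨍ y in ball c' s, f y ∂μ) - m = ⨍ y in ball c' s, (f y - m) ∂μ :=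
      (aux_avg_sub μ _ (hpos c' s hs) (hfin c' s) f (hint f hfc c' s) m).symm
    rw [e1]
    refine le_trans (aux_avg_abs μ _ _) ?_
    have hcont1 : Continuous fun y : Rn n => |f y - m| := (hfc.sub continuous_const).abs
    have hVpos : 0 < (μ (ball c r)).toReal := ENNReal.toReal_pos (hpos c r hr) (hfin c r)
    have hV'pos : 0 < (μ (ball c' s)).toReal := ENNReal.toReal_pos (hpos c' s hs) (hfin c' s)
    have hVk : (μ (ball c r)).toReal ≤ k * (μ (ball c' s)).toReal := by
      have h := ENNReal.toReal_mono (ENNReal.mul_ne_top ENNReal.ofReal_ne_top (hfin c' s)) hkμ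
      rwa [ENNReal.toReal_mul, ENNReal.toReal_ofReal hk] at h
    have hII : ∫ y in ball c' s, |f y - m| ∂μ ≤ ∫ y in ball c r, |f y - m| ∂μ :=
      setIntegral_mono_set (hint _ hcont1 c r)
        (Filter.Eventually.of_forall fun y => abs_nonneg _) (HasSubset.Subset.eventuallyLE hsub)
    have hI'0 : 0 ≤ ∫ y in ball c' s, |f y - m| ∂μ := integral_nonneg fun y => abs_nonneg _
    have hI0 : 0 ≤ ∫ y in ball c r, |f y - m| ∂μ := integral_nonneg fun y => abs_nonneg _
    have key : (∫ y in ball c' s, |f y - m| ∂μ) * (μ (ball c r)).toReal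
        ≤ (k * ∫ y in ball c r, |f y - m| ∂μ) * (μ (ball c' s)).toReal := by
      nlinarith [mul_le_mul_of_nonneg_left hVk hI'0,
        mul_le_mul_of_nonneg_right hII (mul_nonneg hk hV'pos.le)]
    have h2 : ⨍ y in ball c' s, |f y - m| ∂μ ≤ k * ⨍ y in ball c r, |f y - m| ∂μ := by
      rw [setAverage_eq, setAverage_eq, smul_eq_mul, smul_eq_mul]
      have h2' : (∫ y in ball c' s, |f y - m| ∂μ) / (μ (ball c' s)).toReal
          ≤ (k * ∫ y in ball c r, |f y - m| ∂μ) / (μ (ball c r)).toReal :=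
        (div_le_div_iff₀ hV'pos hVpos).2 key
      calc ((μ (ball c' s)).toReal)⁻¹ * ∫ y in ball c' s, |f y - m| ∂μ
          = (∫ y in ball c' s, |f y - m| ∂μ) / (μ (ball c' s)).toReal := by ring
        _ ≤ (k * ∫ y in ball c r, |f y - m| ∂μ) / (μ (ball c r)).toReal := h2'
        _ = k * (((μ (ball c r)).toReal)⁻¹ * ∫ y in ball c r, |f y - m| ∂μ) := by ring
    refine h2.trans ?_
    have h3 := hpoinF x hx c r hr hxb
    rw [← hm] at h3
    exact mul_le_mul_of_nonneg_left h3 hk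
  -- telescoping: bound at the center
  have main1 : ∀ x, maxFnMu μ (fun y => ‖fderiv ℝ f y‖ ^ p) x ≤ ENNReal.ofReal (α ^ p) →
      ∀ r : ℝ, 0 < r →
      |f x - ⨍ y in ball x r, f y ∂μ| ≤ 2 * K * (max CP 0) * α * r := by
    intro x hx r hr
    have hrk : ∀ k : ℕ, (0:ℝ) < r / 2 ^ k := fun k => by positivity
    set a : ℕ → ℝ := fun k => ⨍ y in ball x (r / 2 ^ k), f y ∂μ with ha
    have hstepk : ∀ k : ℕ, |a (k+1) - a k| ≤ (K * (max CP 0) * α * r) * (1/2)^k := by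
      intro k
      have h2k : (0:ℝ) < 2 ^ k := by positivity
      have hsub : ball x (r / 2 ^ (k+1)) ⊆ ball x (r / 2 ^ k) := by
        apply ball_subset_ball
        rw [pow_succ, div_le_div_iff₀ (by positivity) h2k]
        nlinarith
      have hdk : μ (ball x (r / 2 ^ k)) ≤ ENNReal.ofReal K * μ (ball x (r / 2 ^ (k+1))) := by
        have h2 : (2:ℝ) * (r / 2 ^ (k+1)) = r / 2 ^ k := by
          rw [pow_succ]; field_simp
        have h := hKd x (r / 2 ^ (k+1)) (hrk (k+1))
        rwa [h2] at h
      have h := hstep x hx x (r / 2 ^ k) (hrk k) (mem_ball_self (hrk k)) x (r / 2 ^ (k+1))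
        (hrk (k+1)) hsub K hK0 hdk
      simp only [ha]
      calc |(⨍ y in ball x (r / 2 ^ (k+1)), f y ∂μ) - ⨍ y in ball x (r / 2 ^ k), f y ∂μ|
          ≤ K * ((max CP 0) * (r / 2 ^ k) * α) := h
        _ = (K * (max CP 0) * α * r) * (1/2)^k := by
            rw [div_pow, one_pow]; field_simp
    have hcoef : 0 ≤ K * (max CP 0) * α * r :=
      mul_nonneg (mul_nonneg (mul_nonneg hK0 hCP'0) hα.le) hr.le
    have hsum : ∀ N : ℕ, |a N - a 0| ≤ (K * (max CP 0) * α * r) * 2 := by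
      intro N
      have h1 : |a N - a 0| ≤ ∑ k ∈ Finset.range N, (K * (max CP 0) * α * r) * (1/2)^k := by
        induction N with
        | zero => simp
        | succ N ih =>
          rw [Finset.sum_range_succ]
          have ht := abs_sub_le (a (N+1)) (a N) (a 0)
          have h2 := hstepk N
          linarith
      refine h1.trans ?_
      rw [← Finset.mul_sum]
      exact mul_le_mul_of_nonneg_left (sum_geometric_two_le N) hcoef
    have hlim : ∀ ε : ℝ, 0 < ε → ∃ N : ℕ, |f x - a N| ≤ ε := by
      intro ε hε
      obtain ⟨δ, hδ, hδf⟩ := Metric.continuousAt_iff.1 hfc.continuousAt ε hε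
      obtain ⟨N, hN⟩ : ∃ N : ℕ, r / 2 ^ N < δ := by
        obtain ⟨N, hN⟩ := pow_unbounded_of_one_lt (r / δ) (by norm_num : (1:ℝ) < 2)
        refine ⟨N, ?_⟩
        rw [div_lt_iff₀ (by positivity : (0:ℝ) < 2 ^ N)]
        rw [div_lt_iff₀ hδ] at hN
        nlinarith [hN]
      refine ⟨N, ?_⟩
      have hmem : μ (ball x (r / 2 ^ N)) ≠ 0 := hpos _ _ (hrk N)
      have e1 : a N - f x = ⨍ y in ball x (r / 2 ^ N), (f y - f x) ∂μ := by
        simp only [ha]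
        exact (aux_avg_sub μ _ hmem (hfin _ _) f (hint f hfc _ _) (f x)).symm
      have e2 : |f x - a N| = |⨍ y in ball x (r / 2 ^ N), (f y - f x) ∂μ| := by
        rw [abs_sub_comm, e1]
      rw [e2]
      refine le_trans (aux_avg_abs μ _ _) ?_
      have hVpos : 0 < (μ (ball x (r / 2 ^ N))).toReal := ENNReal.toReal_pos hmem (hfin _ _)
      rw [setAverage_eq, smul_eq_mul]
      have hIb : ∫ y in ball x (r / 2 ^ N), |f y - f x| ∂μ
          ≤ ε * (μ (ball x (r / 2 ^ N))).toReal := by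
        have hb : ∀ y ∈ ball x (r / 2 ^ N), |f y - f x| ≤ ε := by
          intro y hy
          have h1 : dist y x < δ := lt_trans (mem_ball.1 hy) hN
          have h2 := hδf h1
          rw [Real.dist_eq] at h2
          exact h2.le
        calc ∫ y in ball x (r / 2 ^ N), |f y - f x| ∂μ
            ≤ ∫ _ in ball x (r / 2 ^ N), ε ∂μ :=
              setIntegral_mono_on (hint _ (hfc.sub continuous_const).abs x _)
                (integrableOn_const (hfin x _)) measurableSet_ball hb
          _ = ε * (μ (ball x (r / 2 ^ N))).toReal := by
              rw [setIntegral_const, smul_eq_mul, mul_comm, measureReal_def]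
      calc ((μ (ball x (r / 2 ^ N))).toReal)⁻¹ * ∫ y in ball x (r / 2 ^ N), |f y - f x| ∂μ
          ≤ ((μ (ball x (r / 2 ^ N))).toReal)⁻¹ * (ε * (μ (ball x (r / 2 ^ N))).toReal) :=
            mul_le_mul_of_nonneg_left hIb (by positivity)
        _ = ε := by field_simp
    have ha0 : a 0 = ⨍ y in ball x r, f y ∂μ := by simp only [ha]; norm_num
    rw [← ha0]
    by_contra hcon
    push_neg at hcon
    obtain ⟨N, hN⟩ := hlim ((|f x - a 0| - 2 * K * (max CP 0) * α * r)/2) (by linarith)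
    have ht := abs_sub_le (f x) (a N) (a 0)
    have h2 := hsum N
    linarith
  -- final assembly
  refine ⟨(20 * K + 8 * K^3) * (max CP 0) + K * (max CP 0) + 1, ?_, f, ?_, ?_, ?_, ?_⟩
  · have h1 : 0 ≤ (20 * K + 8 * K^3) * (max CP 0) :=
      mul_nonneg (by positivity) hCP'0
    have h2 : 0 ≤ K * (max CP 0) := mul_nonneg hK0 hCP'0
    linarith
  · intro x hx
    exact absurd rfl hx
  · have he : {x : Rn n | f x ≠ f x} = ∅ := by ext x; simp
    rw [he]
    exact measure_empty
  · -- Lipschitz estimate against ball averages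
    intro x hx r hr
    have h := main1 x hx r hr
    refine h.trans ?_
    have hKCP : 0 ≤ K * (max CP 0) := mul_nonneg hK0 hCP'0
    have h8 : 0 ≤ (20 * K + 8 * K^3) * (max CP 0) := mul_nonneg (by positivity) hCP'0
    nlinarith [mul_pos hα hr, mul_nonneg h8 (mul_pos hα hr).le]
  · -- Lipschitz estimate between points
    intro x hx y hy
    rcases eq_or_ne x y with rfl | hxy
    · simp
    · have hd : 0 < dist x y := dist_pos.2 hxy
      have h2r : 0 < 2 * dist x y := by positivity
      have h8r : 0 < 8 * dist x y := by positivity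
      have t1 := main1 x hx (2 * dist x y) h2r
      have t3 := main1 y hy (8 * dist x y) h8r
      have hsub : ball x (2 * dist x y) ⊆ ball y (8 * dist x y) := by
        intro z hz
        rw [mem_ball] at hz ⊢
        have h1 := dist_triangle z x y
        linarith
      have hmeas : μ (ball y (8 * dist x y))
          ≤ ENNReal.ofReal (K^3) * μ (ball x (2 * dist x y)) := by
        have hsub2 : ball y (8 * dist x y) ⊆ ball x (16 * dist x y) := by
          intro z hz
          rw [mem_ball] at hz ⊢
          have h1 := dist_triangle z y x
          have h2 : dist y x = dist x y := dist_comm y x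
          linarith
        calc μ (ball y (8 * dist x y)) ≤ μ (ball x (16 * dist x y)) := measure_mono hsub2
          _ ≤ ENNReal.ofReal K * μ (ball x (8 * dist x y)) := by
              have h := hKd x (8 * dist x y) h8r
              rwa [show (2:ℝ) * (8 * dist x y) = 16 * dist x y by ring] at h
          _ ≤ ENNReal.ofReal K * (ENNReal.ofReal K * μ (ball x (4 * dist x y))) := by
              have h := hKd x (4 * dist x y) (by positivity)
              rw [show (2:ℝ) * (4 * dist x y) = 8 * dist x y by ring] at h
              exact mul_le_mul_right h _
          _ ≤ ENNReal.ofReal K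
              * (ENNReal.ofReal K * (ENNReal.ofReal K * μ (ball x (2 * dist x y)))) := by
              have h := hKd x (2 * dist x y) h2r
              rw [show (2:ℝ) * (2 * dist x y) = 4 * dist x y by ring] at h
              exact mul_le_mul_right (mul_le_mul_right h _) _
          _ = ENNReal.ofReal (K^3) * μ (ball x (2 * dist x y)) := by
              rw [ENNReal.ofReal_pow hK0]
              ring
      have t2 := hstep y hy y (8 * dist x y) h8r (mem_ball_self h8r) x (2 * dist x y) h2r hsub
        (K^3) (pow_nonneg hK0 3) hmeas
      have htri1 := abs_sub_le (f x) (⨍ z in ball x (2 * dist x y), f z ∂μ) (f y)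
      have htri2 := abs_sub_le (⨍ z in ball x (2 * dist x y), f z ∂μ)
        (⨍ z in ball y (8 * dist x y), f z ∂μ) (f y)
      have t3' : |(⨍ z in ball y (8 * dist x y), f z ∂μ) - f y|
          ≤ 2 * K * (max CP 0) * α * (8 * dist x y) := by
        rw [abs_sub_comm]
        exact t3
      have hKCP : 0 ≤ K * (max CP 0) := mul_nonneg hK0 hCP'0
      nlinarith [mul_pos hα hd, mul_nonneg hKCP (mul_pos hα hd).le,
        mul_nonneg (mul_nonneg (pow_nonneg hK0 3) hCP'0) (mul_pos hα hd).le]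

end
end
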